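/- arXiv:1709.02580 — 3 statements merged into one kernel-verified Lean document; each statement's English description precedes it below -/
import Mathlib

section
/- Let p be an odd prime, let η ∈ F_{p^2} be a root of an irreducible quadratic X² + c₁X + c₀ over F_p (so F_{p^2} = F_p(η)), and let Φ : F_p^n × F_p^n → F_{p^2}^n be the F_p-linear bijection (a,b) ↦ a + ηb (coordinatewise), where F_{p^2}^n is further identified with R(η) = F_{p^2}[X]/(X^n+1). Let S be a totally isotropic simultaneously negacyclic subspace of F_p^n × F_p^n such that Φ(S) is an F_{p^2}-linear subspace of F_{p^2}^n. Then Φ(S) is an ideal of R(η), and moreover Φ(S^⊥) is also an ideal of R(η), where S^⊥ is the dual of S with respect to the symplectic inner product. -/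
open Polynomial

/-- The negacyclic shift `N : F_p^n → F_p^n`. -/
def negashift (p n : ℕ) (hn : 0 < n) (u : Fin n → ZMod p) : Fin n → ZMod p :=
  fun i => if (i : ℕ) = 0 then -u ⟨n - 1, Nat.sub_lt hn Nat.one_pos⟩
           else u ⟨(i : ℕ) - 1, Nat.lt_of_le_of_lt (Nat.sub_le _ _) i.isLt⟩

/-- The symplectic inner product on `F_p^n × F_p^n`. -/
def sympForm (p n : ℕ) (u v : (Fin n → ZMod p) × (Fin n → ZMod p)) : ZMod p :=
  (∑ j, u.1 j * v.2 j) - (∑ j, u.2 j * v.1 j)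

/-- The ring `R(η) = F_{p²}[X]/(X^n + 1)`. -/
abbrev Rpn2 (p n : ℕ) [Fact p.Prime] :=
  Polynomial (GaloisField p 2) ⧸ Ideal.span {(X : Polynomial (GaloisField p 2)) ^ n + 1}

/-- The quotient map `F_{p²}[X] → R(η)`. -/
noncomputable def mkR2 (p n : ℕ) [Fact p.Prime] : Polynomial (GaloisField p 2) →+* Rpn2 p n :=
  Ideal.Quotient.mk (Ideal.span {(X : Polynomial (GaloisField p 2)) ^ n + 1})

/-- The identification `Φ : F_p^n × F_p^n → R(η)`, `(a,b) ↦ a + ηb`. -/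
noncomputable def PhiMap (p n : ℕ) [Fact p.Prime] (η : GaloisField p 2)
    (ab : (Fin n → ZMod p) × (Fin n → ZMod p)) : Rpn2 p n :=
  mkR2 p n (∑ j : Fin n,
    C (algebraMap (ZMod p) (GaloisField p 2) (ab.1 j)
        + η * algebraMap (ZMod p) (GaloisField p 2) (ab.2 j)) * X ^ (j : ℕ))

/-!
`Φ` is injective (as `1, η` are `F_p`-independent and `X^j`, `j < n`, are independent in `R(η)`),
and it turns the negashift into multiplication by `x = X mod (Xⁿ + 1)` and the map
`M(a, b) = (-c₀b, a - c₁b)` into multiplication by `η`. An additive subgroup of `R(η)` stable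
under `F_{p²}`-scalars and under `x` is an ideal, since `x` generates `R(η)`; this settles `Φ(S)`.
For `S^⊥`: the negashift preserves the symplectic form and, being injective, permutes the finite
set `S`; and `⟨Mu, v⟩ = -⟨u, Mv⟩ - c₁⟨u, v⟩` with `M(S) ⊆ S` by injectivity of `Φ`. Hence `S^⊥`
is stable under both, and so `Φ(S^⊥)` is stable under `F_{p²} = F_p + F_p η` and under `x`.
-/

section FieldExtension

variable {F K : Type*} [Field F] [Field K] [Algebra F K] {η : K}

theorem notMem_range_algebraMap_of_irreducible {q : F[X]} (hq : Irreducible q)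
    (hdeg : q.degree ≠ 1) (hroot : aeval η q = 0) : η ∉ Set.range (algebraMap F K) := by
  rintro ⟨t, rfl⟩
  rw [aeval_algebraMap_apply_eq_algebraMap_eval, map_eq_zero_iff _ (algebraMap F K).injective]
    at hroot
  exact hdeg (degree_eq_one_of_irreducible_of_root hq hroot)

theorem linearIndependent_one_of_notMem_range (hη : η ∉ Set.range (algebraMap F K)) :
    LinearIndependent F ![1, η] :=
  (LinearIndependent.pair_iff' one_ne_zero).2 fun a ha =>
    hη ⟨a, by rw [Algebra.algebraMap_eq_smul_one, ha]⟩

theorem eq_zero_of_algebraMap_add_mul_algebraMap_eq_zero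
    (hη : η ∉ Set.range (algebraMap F K)) {a b : F}
    (h : algebraMap F K a + η * algebraMap F K b = 0) : a = 0 ∧ b = 0 := by
  refine (LinearIndependent.pair_iff (x := (1 : K)) (y := η)).1
    (linearIndependent_one_of_notMem_range hη) a b ?_
  rw [Algebra.smul_def, Algebra.smul_def, mul_one, mul_comm _ η, h]

theorem exists_algebraMap_add_mul_algebraMap_eq (hK : Module.finrank F K = 2)
    (hη : η ∉ Set.range (algebraMap F K)) (c : K) :
    ∃ a b : F, algebraMap F K a + η * algebraMap F K b = c := by
  have : FiniteDimensional F K := Module.finite_of_finrank_eq_succ hK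
  have hspan := (linearIndependent_one_of_notMem_range hη).span_eq_top_of_card_eq_finrank'
    (by simp [hK])
  obtain ⟨f, hf⟩ : ∃ f : Fin 2 → F, ∑ i, f i • ![1, η] i = c :=
    (Submodule.mem_span_range_iff_exists_fun F).1 (hspan ▸ Submodule.mem_top)
  refine ⟨f 0, f 1, ?_⟩
  rw [← hf, Fin.sum_univ_two]
  simp [Algebra.smul_def, mul_comm]

end FieldExtension

theorem AddSubmonoid.exists_ideal_eq_of_mul_mem {R A : Type*} [CommSemiring R] [CommSemiring A]
    [Algebra R A] (N : AddSubmonoid A) {x : A} (hx : Algebra.adjoin R {x} = ⊤)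
    (hsmul : ∀ r : R, ∀ m ∈ N, r • m ∈ N) (hmul : ∀ m ∈ N, x * m ∈ N) :
    ∃ I : Ideal A, (I : Set A) = N := by
  -- The multipliers of `N` form a subalgebra containing `x`.
  let B : Subalgebra R A :=
    { carrier := {a | ∀ m ∈ N, a * m ∈ N}
      mul_mem' := fun ha hb m hm => by rw [mul_assoc]; exact ha _ (hb m hm)
      add_mem' := fun ha hb m hm => by rw [add_mul]; exact N.add_mem (ha m hm) (hb m hm)
      algebraMap_mem' := fun r m hm => by rw [← Algebra.smul_def]; exact hsmul r m hm }
  have hB : B = ⊤ := eq_top_iff.2 (hx ▸ Algebra.adjoin_le (Set.singleton_subset_iff.2 hmul))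
  exact ⟨{ N with smul_mem' := fun a m hm => (hB ▸ Algebra.mem_top : a ∈ B) m hm }, rfl⟩

def negacyclicShift {R : Type*} [Neg R] {m : ℕ} (e : Fin (m + 1) → R) : Fin (m + 1) → R :=
  Fin.cons (-e (Fin.last m)) (e ∘ Fin.castSucc)

theorem negacyclicShift_injective {R : Type*} [InvolutiveNeg R] {m : ℕ} :
    Function.Injective (negacyclicShift (R := R) (m := m)) := by
  intro e e' h
  obtain ⟨hlast, hinit⟩ := Fin.cons_injective2 h
  ext i
  induction i using Fin.lastCases with
  | last => exact neg_injective hlast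
  | cast i => exact congrFun hinit i

theorem dotProduct_negacyclicShift {R : Type*} [CommRing R] {m : ℕ} (e e' : Fin (m + 1) → R) :
    negacyclicShift e ⬝ᵥ negacyclicShift e' = e ⬝ᵥ e' := by
  rw [dotProduct, dotProduct, Fin.sum_univ_succ,
    Fin.sum_univ_castSucc (f := fun i => e i * e' i)]
  simp only [negacyclicShift, Fin.cons_zero, Fin.cons_succ, Function.comp_apply, neg_mul_neg]
  ring

theorem mul_linearCombination_pow_eq {K A : Type*} [CommRing K] [CommRing A] [Algebra K A]
    {x : A} {m : ℕ} (hx : x ^ (m + 1) = -1) (e : Fin (m + 1) → K) :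
    x * Fintype.linearCombination K (fun j : Fin (m + 1) => x ^ (j : ℕ)) e =
      Fintype.linearCombination K (fun j : Fin (m + 1) => x ^ (j : ℕ)) (negacyclicShift e) := by
  simp only [Fintype.linearCombination_apply]
  rw [Finset.mul_sum, Fin.sum_univ_castSucc, Fin.sum_univ_succ]
  simp only [negacyclicShift, Fin.cons_zero, Fin.cons_succ, Function.comp_apply, Fin.val_last,
    Fin.val_castSucc, Fin.val_succ, Fin.val_zero, pow_zero, mul_smul_comm, ← pow_succ', hx,
    neg_smul, smul_neg]
  exact add_comm _ _

theorem negashift_eq_negacyclicShift (p m : ℕ) (hn : 0 < m + 1) (u : Fin (m + 1) → ZMod p) :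
    negashift p (m + 1) hn u = negacyclicShift u := by
  ext i
  induction i using Fin.cases with
  | zero => simp [negashift, negacyclicShift, Fin.last]
  | succ i => simp [negashift, negacyclicShift]; rfl

theorem adjoin_mkR2_X_eq_top (p n : ℕ) [Fact p.Prime] :
    Algebra.adjoin (GaloisField p 2) {mkR2 p n X} = ⊤ :=
  AdjoinRoot.adjoinRoot_eq_top

theorem mkR2_X_pow_eq_neg_one (p n : ℕ) [Fact p.Prime] : mkR2 p n X ^ n = -1 := by
  rw [← map_pow, eq_neg_iff_add_eq_zero, ← map_one (mkR2 p n), ← map_add]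
  exact Ideal.Quotient.eq_zero_iff_mem.2 (Ideal.subset_span rfl)

theorem linearIndependent_mkR2_X_pow (p n : ℕ) [Fact p.Prime] (hn : 0 < n) :
    LinearIndependent (GaloisField p 2) (fun j : Fin n => mkR2 p n X ^ (j : ℕ)) := by
  have hmonic : ((X : (GaloisField p 2)[X]) ^ n + 1).Monic := monic_X_pow_add_C 1 hn.ne'
  have hdeg : ((X : (GaloisField p 2)[X]) ^ n + 1).natDegree = n := natDegree_X_pow_add_C
  have := (AdjoinRoot.powerBasis' hmonic).basis.linearIndependent.comp (Fin.cast hdeg.symm)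
    (Fin.cast_injective _)
  rw [PowerBasis.coe_basis] at this
  exact this

section PairVectors

variable {F K ι : Type*} [CommRing F] [CommRing K] [Algebra F K]

/-- `Φ` before `F_{p²}^n` is identified with `R(η)`. -/
def phiVec (η : K) (u : (ι → F) × (ι → F)) : ι → K :=
  fun j => algebraMap F K (u.1 j) + η * algebraMap F K (u.2 j)

/-- Multiplication by `η` in the coordinates `a + ηb`, when `η² = -c₁η - c₀`. -/
def etaMul (c₀ c₁ : F) (u : (ι → F) × (ι → F)) : (ι → F) × (ι → F) :=
  (-(c₀ • u.2), u.1 - c₁ • u.2)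

theorem phiVec_add (η : K) (u v : (ι → F) × (ι → F)) :
    phiVec η (u + v) = phiVec η u + phiVec η v := by
  ext j
  simp only [phiVec, Prod.fst_add, Prod.snd_add, Pi.add_apply, map_add]
  ring

theorem phiVec_smul (η : K) (a : F) (u : (ι → F) × (ι → F)) :
    phiVec η (a • u) = algebraMap F K a • phiVec η u := by
  ext j
  simp only [phiVec, Prod.smul_fst, Prod.smul_snd, Pi.smul_apply, smul_eq_mul, map_mul]
  ring

theorem smul_phiVec_eq_phiVec_etaMul {η : K} {c₀ c₁ : F}
    (hquad : η ^ 2 + algebraMap F K c₁ * η + algebraMap F K c₀ = 0) (u : (ι → F) × (ι → F)) :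
    η • phiVec η u = phiVec η (etaMul c₀ c₁ u) := by
  ext j
  simp only [phiVec, etaMul, Pi.smul_apply, smul_eq_mul, Pi.neg_apply, Pi.sub_apply, map_neg,
    map_sub, map_mul]
  linear_combination algebraMap F K (u.2 j) * hquad

theorem phiVec_negacyclicShift (η : K) {m : ℕ} (u : (Fin (m + 1) → F) × (Fin (m + 1) → F)) :
    phiVec η (negacyclicShift u.1, negacyclicShift u.2) = negacyclicShift (phiVec η u) := by
  ext i
  induction i using Fin.cases with
  | zero => simp only [phiVec, negacyclicShift, Fin.cons_zero, map_neg]; ring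
  | succ i => simp [phiVec, negacyclicShift]

end PairVectors

theorem phiVec_injective {F K ι : Type*} [Field F] [Field K] [Algebra F K] {η : K}
    (hη : η ∉ Set.range (algebraMap F K)) :
    Function.Injective (phiVec (F := F) (ι := ι) η) := by
  intro u v h
  have hcoord (j : ι) := eq_zero_of_algebraMap_add_mul_algebraMap_eq_zero hη
    (a := u.1 j - v.1 j) (b := u.2 j - v.2 j) <| by
      have := congrFun h j
      simp only [phiVec] at this
      simp only [map_sub]
      linear_combination this
  exact Prod.ext (funext fun j => sub_eq_zero.1 (hcoord j).1)
    (funext fun j => sub_eq_zero.1 (hcoord j).2)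

section PhiMap

variable {p n : ℕ} [Fact p.Prime] {η : GaloisField p 2}

theorem PhiMap_eq_linearCombination (u : (Fin n → ZMod p) × (Fin n → ZMod p)) :
    PhiMap p n η u = Fintype.linearCombination (GaloisField p 2)
      (fun j : Fin n => mkR2 p n X ^ (j : ℕ)) (phiVec η u) := by
  rw [PhiMap, map_sum, Fintype.linearCombination_apply]
  refine Finset.sum_congr rfl fun j _ => ?_
  rw [map_mul, map_pow, ← Polynomial.algebraMap_eq]
  exact (Algebra.smul_def (A := Rpn2 p n) (phiVec η u j) _).symm

theorem PhiMap_add (u v : (Fin n → ZMod p) × (Fin n → ZMod p)) :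
    PhiMap p n η (u + v) = PhiMap p n η u + PhiMap p n η v := by
  simp only [PhiMap_eq_linearCombination, phiVec_add, map_add]

theorem PhiMap_smul (a : ZMod p) (u : (Fin n → ZMod p) × (Fin n → ZMod p)) :
    PhiMap p n η (a • u) = algebraMap (ZMod p) (GaloisField p 2) a • PhiMap p n η u := by
  simp only [PhiMap_eq_linearCombination, phiVec_smul, map_smul]

theorem smul_PhiMap_eq_PhiMap_etaMul {c₀ c₁ : ZMod p}
    (hquad : η ^ 2 + algebraMap (ZMod p) _ c₁ * η + algebraMap (ZMod p) _ c₀ = 0)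
    (u : (Fin n → ZMod p) × (Fin n → ZMod p)) :
    η • PhiMap p n η u = PhiMap p n η (etaMul c₀ c₁ u) := by
  simp only [PhiMap_eq_linearCombination, ← map_smul, smul_phiVec_eq_phiVec_etaMul hquad]

theorem mkR2_X_mul_PhiMap (hn : 0 < n) (u : (Fin n → ZMod p) × (Fin n → ZMod p)) :
    mkR2 p n X * PhiMap p n η u
      = PhiMap p n η (negashift p n hn u.1, negashift p n hn u.2) := by
  obtain ⟨m, rfl⟩ := Nat.exists_eq_add_one_of_ne_zero hn.ne'
  rw [PhiMap_eq_linearCombination, PhiMap_eq_linearCombination,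
    mul_linearCombination_pow_eq (mkR2_X_pow_eq_neg_one p (m + 1)), negashift_eq_negacyclicShift,
    negashift_eq_negacyclicShift, phiVec_negacyclicShift]

theorem PhiMap_injective (hn : 0 < n) (hη : η ∉ Set.range (algebraMap (ZMod p) _)) :
    Function.Injective (PhiMap p n η) := by
  have hL := (linearIndependent_mkR2_X_pow p n hn).fintypeLinearCombination_injective
  intro u v h
  rw [PhiMap_eq_linearCombination, PhiMap_eq_linearCombination] at h
  exact phiVec_injective hη (hL h)

variable (p n η) in
noncomputable def phiAddHom : ((Fin n → ZMod p) × (Fin n → ZMod p)) →+ Rpn2 p n :=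
  AddMonoidHom.mk' (PhiMap p n η) PhiMap_add

end PhiMap

section Symplectic

variable {p n : ℕ}

theorem sympForm_eq_dotProduct (u v : (Fin n → ZMod p) × (Fin n → ZMod p)) :
    sympForm p n u v = u.1 ⬝ᵥ v.2 - u.2 ⬝ᵥ v.1 :=
  rfl

theorem sympForm_add_left (u u' v : (Fin n → ZMod p) × (Fin n → ZMod p)) :
    sympForm p n (u + u') v = sympForm p n u v + sympForm p n u' v := by
  simp only [sympForm_eq_dotProduct, Prod.fst_add, Prod.snd_add, add_dotProduct]
  ring

theorem sympForm_smul_left (a : ZMod p) (u v : (Fin n → ZMod p) × (Fin n → ZMod p)) :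
    sympForm p n (a • u) v = a * sympForm p n u v := by
  simp only [sympForm_eq_dotProduct, Prod.smul_fst, Prod.smul_snd, smul_dotProduct, smul_eq_mul]
  ring

theorem sympForm_etaMul_left (c₀ c₁ : ZMod p) (u v : (Fin n → ZMod p) × (Fin n → ZMod p)) :
    sympForm p n (etaMul c₀ c₁ u) v
      = -sympForm p n u (etaMul c₀ c₁ v) - c₁ * sympForm p n u v := by
  simp only [sympForm_eq_dotProduct, etaMul, neg_dotProduct, sub_dotProduct, dotProduct_neg,
    dotProduct_sub, smul_dotProduct, dotProduct_smul, smul_eq_mul]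
  ring

theorem negashift_injective (hn : 0 < n) : Function.Injective (negashift p n hn) := by
  obtain ⟨m, rfl⟩ := Nat.exists_eq_add_one_of_ne_zero hn.ne'
  intro u v h
  rw [negashift_eq_negacyclicShift, negashift_eq_negacyclicShift] at h
  exact negacyclicShift_injective h

theorem sympForm_negashift (hn : 0 < n) (u v : (Fin n → ZMod p) × (Fin n → ZMod p)) :
    sympForm p n (negashift p n hn u.1, negashift p n hn u.2)
      (negashift p n hn v.1, negashift p n hn v.2) = sympForm p n u v := by
  obtain ⟨m, rfl⟩ := Nat.exists_eq_add_one_of_ne_zero hn.ne'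
  simp only [sympForm_eq_dotProduct, negashift_eq_negacyclicShift, dotProduct_negacyclicShift]

def sympOrthogonal (S : Submodule (ZMod p) ((Fin n → ZMod p) × (Fin n → ZMod p))) :
    Submodule (ZMod p) ((Fin n → ZMod p) × (Fin n → ZMod p)) where
  carrier := {u | ∀ v ∈ S, sympForm p n u v = 0}
  add_mem' hu hu' v hv := by rw [sympForm_add_left, hu v hv, hu' v hv, add_zero]
  zero_mem' v _ := by simp [sympForm]
  smul_mem' a _ hu v hv := by rw [sympForm_smul_left, hu v hv, mul_zero]

variable {S : Submodule (ZMod p) ((Fin n → ZMod p) × (Fin n → ZMod p))}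

theorem etaMul_mem_sympOrthogonal {c₀ c₁ : ZMod p} (hS : ∀ v ∈ S, etaMul c₀ c₁ v ∈ S)
    {u : (Fin n → ZMod p) × (Fin n → ZMod p)} (hu : u ∈ sympOrthogonal S) :
    etaMul c₀ c₁ u ∈ sympOrthogonal S := fun v hv => by
  rw [sympForm_etaMul_left, hu _ (hS v hv), hu v hv, neg_zero, mul_zero, sub_zero]

variable [Fact p.Prime]

theorem exists_negashift_eq (hn : 0 < n)
    (hS : ∀ v ∈ S, (negashift p n hn v.1, negashift p n hn v.2) ∈ S) :
    ∀ v ∈ S, ∃ w ∈ S, (negashift p n hn w.1, negashift p n hn w.2) = v := by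
  have hinj : Set.InjOn
      (fun w : (Fin n → ZMod p) × (Fin n → ZMod p) => (negashift p n hn w.1, negashift p n hn w.2))
      S :=
    fun u _ v _ h => Prod.ext (negashift_injective hn (congrArg Prod.fst h))
      (negashift_injective hn (congrArg Prod.snd h))
  exact ((Set.toFinite _).injOn_iff_bijOn_of_mapsTo hS).1 hinj |>.surjOn

theorem negashift_mem_sympOrthogonal (hn : 0 < n)
    (hS : ∀ v ∈ S, (negashift p n hn v.1, negashift p n hn v.2) ∈ S)
    {u : (Fin n → ZMod p) × (Fin n → ZMod p)} (hu : u ∈ sympOrthogonal S) :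
    (negashift p n hn u.1, negashift p n hn u.2) ∈ sympOrthogonal S := fun v hv => by
  obtain ⟨w, hw, rfl⟩ := exists_negashift_eq hn hS v hv
  rw [sympForm_negashift]
  exact hu w hw

end Symplectic

section Ideals

variable {p n : ℕ} [Fact p.Prime] {η : GaloisField p 2}

theorem exists_ideal_image_PhiMap_eq (hn : 0 < n)
    (T : AddSubmonoid ((Fin n → ZMod p) × (Fin n → ZMod p)))
    (hsmul : ∀ c : GaloisField p 2, ∀ v ∈ T, ∃ w ∈ T, PhiMap p n η w = c • PhiMap p n η v)
    (hneg : ∀ v ∈ T, (negashift p n hn v.1, negashift p n hn v.2) ∈ T) :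
    ∃ I : Ideal (Rpn2 p n), PhiMap p n η '' T = I := by
  obtain ⟨I, hI⟩ :=
    (T.map (phiAddHom p n η)).exists_ideal_eq_of_mul_mem (adjoin_mkR2_X_eq_top p n)
    (by rintro c _ ⟨v, hv, rfl⟩; exact hsmul c v hv)
    (by rintro _ ⟨v, hv, rfl⟩; exact ⟨_, hneg v hv, (mkR2_X_mul_PhiMap hn v).symm⟩)
  exact ⟨I, by rw [hI, AddSubmonoid.coe_map]; rfl⟩

theorem exists_PhiMap_eq_smul_of_etaMul_mem {c₀ c₁ : ZMod p}
    (hquad : η ^ 2 + algebraMap (ZMod p) _ c₁ * η + algebraMap (ZMod p) _ c₀ = 0)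
    (hη : η ∉ Set.range (algebraMap (ZMod p) _))
    (T : Submodule (ZMod p) ((Fin n → ZMod p) × (Fin n → ZMod p)))
    (hT : ∀ v ∈ T, etaMul c₀ c₁ v ∈ T) (c : GaloisField p 2) {v} (hv : v ∈ T) :
    ∃ w ∈ T, PhiMap p n η w = c • PhiMap p n η v := by
  obtain ⟨a, b, rfl⟩ :=
    exists_algebraMap_add_mul_algebraMap_eq (GaloisField.finrank p two_ne_zero) hη c
  refine ⟨a • v + etaMul c₀ c₁ (b • v),
    T.add_mem (T.smul_mem a hv) (hT _ (T.smul_mem b hv)), ?_⟩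
  rw [PhiMap_add, PhiMap_smul, ← smul_PhiMap_eq_PhiMap_etaMul hquad, PhiMap_smul, add_smul,
    mul_smul]

end Ideals

theorem stmt6_general (p n : ℕ) [Fact p.Prime] (hn : 0 < n)
    (c₀ c₁ : ZMod p) (hcirr : Irreducible (X ^ 2 + C c₁ * X + C c₀))
    (η : GaloisField p 2) (hroot : aeval η (X ^ 2 + C c₁ * X + C c₀) = 0)
    (S : Submodule (ZMod p) ((Fin n → ZMod p) × (Fin n → ZMod p)))
    (hneg : ∀ ab ∈ S, (negashift p n hn ab.1, negashift p n hn ab.2) ∈ S)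
    (hlin : ∀ c : GaloisField p 2, ∀ v ∈ S, ∃ w ∈ S, PhiMap p n η w = c • PhiMap p n η v) :
    (∃ I : Ideal (Rpn2 p n),
      PhiMap p n η '' (S : Set ((Fin n → ZMod p) × (Fin n → ZMod p)))
        = (I : Set (Rpn2 p n))) ∧
    (∃ J : Ideal (Rpn2 p n),
      PhiMap p n η '' {u | ∀ v ∈ S, sympForm p n u v = 0} = (J : Set (Rpn2 p n))) := by
  have hdeg : (X ^ 2 + C c₁ * X + C c₀).degree = 2 := by compute_degree!
  have hη : η ∉ Set.range (algebraMap (ZMod p) _) :=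
    notMem_range_algebraMap_of_irreducible hcirr (by rw [hdeg]; decide) hroot
  have hquad : η ^ 2 + algebraMap (ZMod p) _ c₁ * η + algebraMap (ZMod p) _ c₀ = 0 := by
    simpa using hroot
  have hηS (v) (hv : v ∈ S) : etaMul c₀ c₁ v ∈ S := by
    obtain ⟨w, hw, hΦ⟩ := hlin η v hv
    rwa [← PhiMap_injective hn hη (hΦ.trans (smul_PhiMap_eq_PhiMap_etaMul hquad v))]
  exact ⟨exists_ideal_image_PhiMap_eq hn S.toAddSubmonoid hlin hneg,
    exists_ideal_image_PhiMap_eq hn (sympOrthogonal S).toAddSubmonoid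
      (fun c _ hu => exists_PhiMap_eq_smul_of_etaMul_mem hquad hη _
        (fun _ => etaMul_mem_sympOrthogonal hηS) c hu)
      (fun _ => negashift_mem_sympOrthogonal hn hneg)⟩

/-- if `S` is a totally isotropic simultaneously negacyclic subspace of
`F_p^n × F_p^n` whose image `Φ(S)` is `F_{p²}`-linear, then `Φ(S)` is an ideal of
`R(η)`, and `Φ(S^⊥)` is also an ideal of `R(η)`. -/
theorem stmt6 (p n : ℕ) [Fact p.Prime] (hp : Odd p) (hn : 0 < n)
    (c₀ c₁ : ZMod p) (hcirr : Irreducible (X ^ 2 + C c₁ * X + C c₀))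
    (η : GaloisField p 2) (hroot : aeval η (X ^ 2 + C c₁ * X + C c₀) = 0)
    (S : Submodule (ZMod p) ((Fin n → ZMod p) × (Fin n → ZMod p)))
    (hiso : ∀ u ∈ S, ∀ v ∈ S, sympForm p n u v = 0)
    (hneg : ∀ ab ∈ S, (negashift p n hn ab.1, negashift p n hn ab.2) ∈ S)
    (hlin : ∀ c : GaloisField p 2, ∀ v ∈ S, ∃ w ∈ S, PhiMap p n η w = c • PhiMap p n η v) :
    (∃ I : Ideal (Rpn2 p n),
      PhiMap p n η '' (S : Set ((Fin n → ZMod p) × (Fin n → ZMod p)))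
        = (I : Set (Rpn2 p n))) ∧
    (∃ J : Ideal (Rpn2 p n),
      PhiMap p n η '' {u | ∀ v ∈ S, sympForm p n u v = 0} = (J : Set (Rpn2 p n))) :=
  stmt6_general p n hn c₀ c₁ hcirr η hroot S hneg hlin
end

section
/- Let p be an odd prime, and let n divide p^t + 1 for some positive integer t with (p^t+1)/n odd. Let η ∈ F_{p^2} be a root of an irreducible quadratic over F_p, and let Φ : F_p^n × F_p^n → R(η) = F_{p^2}[X]/(X^n+1) be the identification (a,b) ↦ a + ηb. Let S be a totally isotropic simultaneously negacyclic subspace of F_p^n × F_p^n such that Φ(S) is an ideal of R(η). Let g be the monic generator of the ideal of R = F_p[X]/(X^n+1) given by the first projection F = {a : (a,b) ∈ S for some b}, and assume g(−X) = g(X). Then there is exactly one f ∈ R such that (g,f) ∈ S (i.e., S is uniquely negacyclic). -/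
open Polynomial

/-- The cyclotomic ring `R = F_p[X]/(X^n + 1)`. -/
abbrev Rpn (p n : ℕ) := Polynomial (ZMod p) ⧸ Ideal.span {(X : Polynomial (ZMod p)) ^ n + 1}

/-- The quotient map `F_p[X] → R`. -/
noncomputable def mkR (p n : ℕ) : Polynomial (ZMod p) →+* Rpn p n :=
  Ideal.Quotient.mk (Ideal.span {(X : Polynomial (ZMod p)) ^ n + 1})

/-- The polynomial `a_0 + a_1 X + ⋯ + a_{n−1} X^{n−1}` attached to a vector. -/
noncomputable def toPoly (p n : ℕ) (a : Fin n → ZMod p) : Polynomial (ZMod p) :=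
  ∑ j : Fin n, C (a j) * X ^ (j : ℕ)

/-- The identification `F_p^n → R`, `a ↦ a(x)`. -/
noncomputable def toR (p n : ℕ) (a : Fin n → ZMod p) : Rpn p n := mkR p n (toPoly p n a)

/-- The identification `F_p^n × F_p^n → R × R`. -/
noncomputable def toR2 (p n : ℕ) (ab : (Fin n → ZMod p) × (Fin n → ZMod p)) :
    Rpn p n × Rpn p n := (toR p n ab.1, toR p n ab.2)

/-!
It suffices to show that `(0, b) ∈ S` forces `b = 0`, since two pairs of `S` with first
component `g` differ by such a pair.

Multiplying `Φ(0, b) = η b` by `η` inside the ideal `Φ(S)` gives `(-c₀ b, -c₁ b) ∈ S`, so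
`b` lies in the first projection and `g ∣ b`. Total isotropy against all negashifts of a pair
`(g, f) ∈ S` says that `g · b* ≡ 0 mod Xⁿ + 1`, where `b*` is the reciprocal of `b`; hence
the cofactor `h = (Xⁿ + 1) / g` divides `b*`. In `R` we have `x⁻¹ = -x^(p^t)`, so by
`g(-X) = g(X)` and Frobenius, `g(x)` divides the reciprocal of every multiple of `g`; hence
also `g ∣ b*`. Since `p ∤ n`, `Xⁿ + 1` is separable, so `g` and `h` are coprime and
`Xⁿ + 1 ∣ b*`, a polynomial of degree `< n`. Thus `b* = 0` and `b = 0`.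
-/

section QuotientPolynomial

variable {K : Type*}

lemma coeff_sum_fin_C_mul_X_pow [Semiring K] {n : ℕ} (γ : Fin n → K) (i : ℕ) :
    (∑ j : Fin n, C (γ j) * X ^ (j : ℕ)).coeff i = if h : i < n then γ ⟨i, h⟩ else 0 := by
  simp only [finsetSum_coeff, coeff_C_mul_X_pow]
  split_ifs with h
  · rw [Finset.sum_eq_single ⟨i, h⟩ (fun j _ hj => if_neg fun hij => hj (Fin.ext hij.symm))
      (fun h' => absurd (Finset.mem_univ _) h'), if_pos rfl]
  · exact Finset.sum_eq_zero fun j _ => if_neg fun hij => h (by rw [hij]; exact j.isLt)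

lemma quotientMk_sum_fin_C_mul_X_pow_injective [Field K] {n : ℕ} {γ γ' : Fin n → K}
    (h : Ideal.Quotient.mk (Ideal.span {(X : K[X]) ^ n + 1})
        (∑ j : Fin n, C (γ j) * X ^ (j : ℕ))
      = Ideal.Quotient.mk _ (∑ j : Fin n, C (γ' j) * X ^ (j : ℕ))) : γ = γ' := by
  rcases Nat.eq_zero_or_pos n with rfl | hn
  · exact Subsingleton.elim _ _
  have hsub : ∑ j : Fin n, C (γ j) * X ^ (j : ℕ) - ∑ j : Fin n, C (γ' j) * X ^ (j : ℕ)
      = ∑ j : Fin n, C ((γ - γ') j) * X ^ (j : ℕ) := by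
    simp [sub_mul, Finset.sum_sub_distrib]
  rw [Ideal.Quotient.eq, Ideal.mem_span_singleton, hsub] at h
  have hzero := eq_zero_of_dvd_of_degree_lt h
    ((degree_sum_fin_lt _).trans_eq (degree_X_pow_add_C hn 1).symm)
  funext j
  have hj := congrArg (coeff · (j : ℕ)) hzero
  rw [coeff_sum_fin_C_mul_X_pow, dif_pos j.isLt] at hj
  exact sub_eq_zero.mp hj

lemma dvd_of_quotientMk_dvd {R : Type*} [CommRing R] {f g h : R} (hg : g ∣ f)
    (H : Ideal.Quotient.mk (Ideal.span {f}) g ∣ Ideal.Quotient.mk (Ideal.span {f}) h) :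
    g ∣ h := by
  obtain ⟨z, hz⟩ := H
  obtain ⟨q, rfl⟩ := Ideal.Quotient.mk_surjective z
  rw [← map_mul, Ideal.Quotient.eq, Ideal.mem_span_singleton] at hz
  simpa using dvd_add (hg.trans hz) (dvd_mul_right g q)

end QuotientPolynomial

section Negacyclic

variable (p n : ℕ)

lemma coeff_toPoly (u : Fin n → ZMod p) (i : ℕ) :
    (toPoly p n u).coeff i = if h : i < n then u ⟨i, h⟩ else 0 :=
  coeff_sum_fin_C_mul_X_pow u i

lemma natDegree_toPoly_le (u : Fin n → ZMod p) : (toPoly p n u).natDegree ≤ n - 1 :=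
  natDegree_le_iff_coeff_eq_zero.mpr fun m hm => by
    rw [coeff_toPoly, dif_neg (by omega)]

lemma toR_zero : toR p n 0 = 0 := by
  simp [toR, toPoly]

lemma toR_injective [Fact p.Prime] : Function.Injective (toR p n) :=
  fun _ _ h => quotientMk_sum_fin_C_mul_X_pow_injective h

lemma mkR_X_pow : mkR p n X ^ n = -1 := by
  have h : mkR p n (X ^ n + 1) = 0 :=
    Ideal.Quotient.eq_zero_iff_mem.mpr (Ideal.mem_span_singleton_self _)
  rw [map_add, map_pow, map_one] at h
  exact eq_neg_of_add_eq_zero_left h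

lemma aeval_mkR_X (Q : (ZMod p)[X]) : aeval (mkR p n X) Q = mkR p n Q :=
  AdjoinRoot.aeval_eq Q

/-- Reduction modulo `X ^ n + 1` of a polynomial of degree `< 2n`, read as a vector. -/
def negacyclicFold (Q : (ZMod p)[X]) : Fin n → ZMod p :=
  fun j => Q.coeff j - Q.coeff (n + j)

lemma toR_negacyclicFold (Q : (ZMod p)[X]) (hQ : Q.natDegree < 2 * n) :
    toR p n (negacyclicFold p n Q) = mkR p n Q := by
  have hlow : (toPoly p n (negacyclicFold p n Q)).natDegree < n :=
    (natDegree_toPoly_le p n _).trans_lt (by omega)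
  rw [toR, ← aeval_mkR_X, ← aeval_mkR_X p n Q, aeval_eq_sum_range' hlow, aeval_eq_sum_range' hQ,
    two_mul, Finset.sum_range_add, ← Finset.sum_add_distrib]
  refine Finset.sum_congr rfl fun i hi => ?_
  rw [coeff_toPoly, dif_pos (Finset.mem_range.mp hi), negacyclicFold, pow_add, mkR_X_pow]
  simp only [Algebra.smul_def, map_sub]
  ring

end Negacyclic

section Negashift

variable (p n : ℕ) (hn : 0 < n)

lemma negashift_eq_negacyclicFold (u : Fin n → ZMod p) :
    negashift p n hn u = negacyclicFold p n (X * toPoly p n u) := by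
  funext ⟨i, hi⟩
  rcases i with _ | k
  · obtain ⟨m, rfl⟩ : ∃ m, n = m + 1 := ⟨n - 1, by omega⟩
    simp [negashift, negacyclicFold, coeff_toPoly]
  · simp [negashift, negacyclicFold, coeff_toPoly, ← add_assoc]
    omega

lemma toR_negashift (u : Fin n → ZMod p) :
    toR p n (negashift p n hn u) = mkR p n X * toR p n u := by
  rw [negashift_eq_negacyclicFold, toR_negacyclicFold, map_mul, toR]
  have := natDegree_toPoly_le p n u
  have := natDegree_X_le (R := ZMod p)
  exact natDegree_mul_le.trans_lt (by omega)

lemma toR_negashift_iterate (k : ℕ) (u : Fin n → ZMod p) :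
    toR p n ((negashift p n hn)^[k] u) = mkR p n X ^ k * toR p n u := by
  induction k with
  | zero => simp
  | succ k ih => rw [Function.iterate_succ_apply', toR_negashift, ih, pow_succ', mul_assoc]

lemma negashift_iterate_apply_last (w : Fin n → ZMod p) {k : ℕ} (hk : k < n) :
    (negashift p n hn)^[k] w ⟨n - 1, by omega⟩ = w ⟨n - 1 - k, by omega⟩ := by
  induction k generalizing w with
  | zero => rfl
  | succ k ih =>
    rw [Function.iterate_succ_apply, ih _ (by omega), negashift, if_neg (by simp; omega)]
    congr 2

lemma natDegree_reflect_toPoly_le (v : Fin n → ZMod p) :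
    (reflect (n - 1) (toPoly p n v)).natDegree ≤ n - 1 :=
  natDegree_reflect_le.trans (max_le le_rfl (natDegree_toPoly_le p n v))

lemma negacyclicFold_mul_reflect_last (u v : Fin n → ZMod p) :
    negacyclicFold p n (toPoly p n u * reflect (n - 1) (toPoly p n v)) ⟨n - 1, by omega⟩
      = ∑ j, u j * v j := by
  have hdeg : (toPoly p n u * reflect (n - 1) (toPoly p n v)).natDegree < n + (n - 1) := by
    have := natDegree_toPoly_le p n u
    have := natDegree_reflect_toPoly_le p n v
    exact natDegree_mul_le.trans_lt (by omega)
  simp only [negacyclicFold]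
  rw [coeff_eq_zero_of_natDegree_lt hdeg, sub_zero, coeff_mul,
    Finset.Nat.sum_antidiagonal_eq_sum_range_succ_mk, Nat.succ_eq_add_one, Nat.sub_add_cancel hn,
    ← Fin.sum_univ_eq_sum_range]
  refine Finset.sum_congr rfl fun j _ => ?_
  rw [coeff_reflect, revAt_le (by omega), coeff_toPoly, coeff_toPoly, dif_pos j.isLt,
    dif_pos (by omega)]
  congr
  omega

/-- Coordinate `n - 1` of `xᵏ · u · reflect v` is the pairing of `Nᵏ u` with `v`, and a vector
whose `Nᵏ`-shifts all vanish in coordinate `n - 1` is zero. -/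
lemma toR_mul_mkR_reflect_eq_zero [Fact p.Prime] (u v : Fin n → ZMod p)
    (h : ∀ k, ∑ j, (negashift p n hn)^[k] u j * v j = 0) :
    toR p n u * mkR p n (reflect (n - 1) (toPoly p n v)) = 0 := by
  set B := reflect (n - 1) (toPoly p n v)
  have hdeg (w : Fin n → ZMod p) : (toPoly p n w * B).natDegree < 2 * n := by
    have := natDegree_toPoly_le p n w
    have : B.natDegree ≤ n - 1 := natDegree_reflect_toPoly_le p n v
    exact natDegree_mul_le.trans_lt (by omega)
  have hfold (w : Fin n → ZMod p) : toR p n (negacyclicFold p n (toPoly p n w * B))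
      = toR p n w * mkR p n B := by
    rw [toR_negacyclicFold _ _ _ (hdeg w), map_mul, toR]
  have hshift (k : ℕ) : (negashift p n hn)^[k] (negacyclicFold p n (toPoly p n u * B))
      = negacyclicFold p n (toPoly p n ((negashift p n hn)^[k] u) * B) := by
    apply toR_injective
    rw [toR_negashift_iterate, hfold, hfold, toR_negashift_iterate, mul_assoc]
  have hzero : negacyclicFold p n (toPoly p n u * B) = 0 := by
    funext i
    have hi := congrFun (hshift (n - 1 - i)) ⟨n - 1, by omega⟩
    rw [negashift_iterate_apply_last _ _ _ _ (by omega), negacyclicFold_mul_reflect_last p n hn, h]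
      at hi
    rw [Pi.zero_apply, ← hi]
    congr 1
    ext
    simp only
    omega
  rw [← hfold, hzero, toR_zero]

end Negashift

section SelfReciprocal

variable {p n t : ℕ}

lemma mkR_X_mul_neg_X_pow (hdvd : n ∣ p ^ t + 1) (hq : Odd ((p ^ t + 1) / n)) :
    mkR p n X * -mkR p n X ^ p ^ t = 1 := by
  have h : mkR p n X ^ (p ^ t + 1) = -1 := by
    rw [← Nat.mul_div_cancel' hdvd, pow_mul, mkR_X_pow]
    exact hq.neg_one_pow (α := Rpn p n)
  calc mkR p n X * -mkR p n X ^ p ^ t = -mkR p n X ^ (p ^ t + 1) := by ring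
    _ = 1 := by rw [h]; ring

variable [Fact p.Prime]

lemma aeval_pow_prime_pow {A : Type*} [CommRing A] [Algebra (ZMod p) A] (r : A)
    (P : (ZMod p)[X]) (t : ℕ) : aeval (r ^ p ^ t) P = aeval r P ^ p ^ t := by
  induction t with
  | zero => simp
  | succ t ih => rw [pow_succ, pow_mul, pow_mul, ← expand_aeval, ZMod.expand_card, map_pow, ih]

lemma aeval_neg_mkR_X_pow {g : (ZMod p)[X]} (hg : g.comp (-X) = g) :
    aeval (-mkR p n X ^ p ^ t) g = mkR p n g ^ p ^ t :=
  calc aeval (-mkR p n X ^ p ^ t) g = aeval (mkR p n X ^ p ^ t) (g.comp (-X)) := by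
        rw [aeval_comp, map_neg, aeval_X]
    _ = mkR p n g ^ p ^ t := by rw [hg, aeval_pow_prime_pow, aeval_mkR_X]

/-- Since `x⁻¹ = -x ^ p ^ t`, reflecting `B` amounts to evaluating it at `-x ^ p ^ t`, where `g`
takes the value `g(x) ^ p ^ t`. -/
lemma mkR_dvd_mkR_reflect (hdvd : n ∣ p ^ t + 1) (hq : Odd ((p ^ t + 1) / n))
    {g B : (ZMod p)[X]} (hg : g.comp (-X) = g) (hgB : g ∣ B) {N : ℕ} (hN : B.natDegree ≤ N) :
    mkR p n g ∣ mkR p n (reflect N B) := by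
  set x := mkR p n X
  have hxy : x * -x ^ p ^ t = 1 := mkR_X_mul_neg_X_pow hdvd hq
  let _ : Invertible (-x ^ p ^ t) := ⟨x, hxy, by rw [mul_comm, hxy]⟩
  have key : aeval x (reflect N B) * (-x ^ p ^ t) ^ N = aeval (-x ^ p ^ t) B :=
    eval₂_reflect_mul_pow _ _ N B hN
  obtain ⟨h, rfl⟩ := hgB
  have hmk : mkR p n (reflect N (g * h)) = mkR p n g ^ p ^ t * (aeval (-x ^ p ^ t) h * x ^ N) :=
    calc mkR p n (reflect N (g * h)) = aeval x (reflect N (g * h)) * (-x ^ p ^ t * x) ^ N := by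
          rw [mul_comm _ x, hxy, one_pow, mul_one, aeval_mkR_X]
      _ = mkR p n g ^ p ^ t * (aeval (-x ^ p ^ t) h * x ^ N) := by
          rw [mul_pow, ← mul_assoc, key, map_mul, aeval_neg_mkR_X_pow hg, mul_assoc]
  rw [hmk]
  exact (dvd_pow_self _ (pow_ne_zero _ (Fact.out : p.Prime).ne_zero)).mul_right _

end SelfReciprocal

lemma separable_X_pow_add_one {p n t : ℕ} [Fact p.Prime] (ht : 0 < t) (hdvd : n ∣ p ^ t + 1) :
    ((X : (ZMod p)[X]) ^ n + 1).Separable := by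
  have hn : (n : ZMod p) ≠ 0 := by
    rw [Ne, ZMod.natCast_eq_zero_iff]
    intro hpn
    exact (Fact.out : p.Prime).not_dvd_one
      ((Nat.dvd_add_right (dvd_pow_self p ht.ne')).mp (hpn.trans hdvd))
  simpa [sub_eq_add_neg] using separable_X_pow_sub_C (-1 : ZMod p) hn (neg_ne_zero.mpr one_ne_zero)

section Quadratic

variable {K L : Type*} [Field K] [Field L] [Algebra K L] {c₀ c₁ : K} {η : L}

lemma quadratic_ne_zero_of_irreducible (h : Irreducible (X ^ 2 + C c₁ * X + C c₀)) (s : K) :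
    s ^ 2 + c₁ * s + c₀ ≠ 0 := by
  intro hs
  have hdeg : (X ^ 2 + C c₁ * X + C c₀ : K[X]).degree = 2 := by compute_degree!
  have := degree_eq_one_of_irreducible_of_root h (x := s) (by simp [IsRoot, hs])
  rw [hdeg] at this
  exact absurd this (by decide)

lemma not_mem_range_algebraMap_of_aeval_eq_zero (h : Irreducible (X ^ 2 + C c₁ * X + C c₀))
    (hη : aeval η (X ^ 2 + C c₁ * X + C c₀) = 0) : η ∉ Set.range (algebraMap K L) := by
  rintro ⟨s, rfl⟩
  apply quadratic_ne_zero_of_irreducible h s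
  apply (algebraMap K L).injective
  simpa [aeval_algebraMap_apply] using hη

lemma eq_and_eq_of_algebraMap_add_mul (hη : η ∉ Set.range (algebraMap K L)) {a b a' b' : K}
    (h : algebraMap K L a + η * algebraMap K L b = algebraMap K L a' + η * algebraMap K L b') :
    a = a' ∧ b = b' := by
  have hb : b = b' := by
    by_contra hne
    have hne' : algebraMap K L b - algebraMap K L b' ≠ 0 :=
      sub_ne_zero.mpr ((algebraMap K L).injective.ne hne)
    refine hη ⟨(a' - a) / (b - b'), ?_⟩
    rw [map_div₀, map_sub, map_sub, div_eq_iff hne']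
    linear_combination -h
  subst hb
  exact ⟨(algebraMap K L).injective (add_right_cancel h), rfl⟩

lemma mul_mul_algebraMap_of_aeval_eq_zero (hη : aeval η (X ^ 2 + C c₁ * X + C c₀) = 0)
    (b : K) :
    η * (η * algebraMap K L b)
      = algebraMap K L (-c₀ * b) + η * algebraMap K L (-c₁ * b) := by
  simp only [map_add, map_pow, map_mul, aeval_X, aeval_C] at hη
  simp only [map_mul, map_neg]
  linear_combination algebraMap K L b * hη

end Quadratic

section Phi

variable {p n : ℕ} [Fact p.Prime] {η : GaloisField p 2}

lemma phiMap_injective (hη : η ∉ Set.range (algebraMap (ZMod p) (GaloisField p 2))) :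
    Function.Injective (PhiMap p n η) := fun ab ab' h => by
  have hcoeff := congrFun (quotientMk_sum_fin_C_mul_X_pow_injective h)
  exact Prod.ext (funext fun j => (eq_and_eq_of_algebraMap_add_mul hη (hcoeff j)).1)
    (funext fun j => (eq_and_eq_of_algebraMap_add_mul hη (hcoeff j)).2)

lemma mkR2_C_mul_phiMap {c₀ c₁ : ZMod p} (hη : aeval η (X ^ 2 + C c₁ * X + C c₀) = 0)
    (b : Fin n → ZMod p) :
    mkR2 p n (C η) * PhiMap p n η (0, b) = PhiMap p n η ((-c₀) • b, (-c₁) • b) := by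
  rw [PhiMap, PhiMap, ← map_mul, Finset.mul_sum]
  simp only [← mul_assoc, ← C_mul, Pi.zero_apply, map_zero, zero_add, Pi.smul_apply,
    smul_eq_mul, mul_mul_algebraMap_of_aeval_eq_zero hη]

end Phi

section Code

variable {p n : ℕ} {S : Submodule (ZMod p) ((Fin n → ZMod p) × (Fin n → ZMod p))}

lemma sum_negashift_iterate_mul_eq_zero (hn : 0 < n)
    (hiso : ∀ u ∈ S, ∀ v ∈ S, sympForm p n u v = 0)
    (hneg : ∀ ab ∈ S, (negashift p n hn ab.1, negashift p n hn ab.2) ∈ S)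
    {a : (Fin n → ZMod p) × (Fin n → ZMod p)} (ha : a ∈ S) {b : Fin n → ZMod p}
    (hb : (0, b) ∈ S) (k : ℕ) : ∑ j, (negashift p n hn)^[k] a.1 j * b j = 0 := by
  have hk : ((negashift p n hn)^[k] a.1, (negashift p n hn)^[k] a.2) ∈ S := by
    induction k with
    | zero => exact ha
    | succ k ih => simpa only [Function.iterate_succ_apply'] using hneg _ ih
  simpa [sympForm] using hiso _ hk _ hb

variable [Fact p.Prime] {c₀ c₁ : ZMod p} {η : GaloisField p 2}

lemma neg_smul_pair_mem_of_zero_pair_mem (hcirr : Irreducible (X ^ 2 + C c₁ * X + C c₀))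
    (hroot : aeval η (X ^ 2 + C c₁ * X + C c₀) = 0)
    (hlin : ∃ I : Ideal (Rpn2 p n),
      PhiMap p n η '' (S : Set ((Fin n → ZMod p) × (Fin n → ZMod p))) = (I : Set (Rpn2 p n)))
    {b : Fin n → ZMod p} (hb : (0, b) ∈ S) : ((-c₀) • b, (-c₁) • b) ∈ S := by
  obtain ⟨I, hI⟩ := hlin
  have hb' : PhiMap p n η (0, b) ∈ I := by
    rw [← SetLike.mem_coe, ← hI]
    exact Set.mem_image_of_mem _ hb
  have hmem : PhiMap p n η ((-c₀) • b, (-c₁) • b) ∈ PhiMap p n η '' (S : Set _) := by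
    rw [hI, SetLike.mem_coe, ← mkR2_C_mul_phiMap hroot]
    exact I.mul_mem_left _ hb'
  obtain ⟨ab, hab, he⟩ := hmem
  rwa [← phiMap_injective (not_mem_range_algebraMap_of_aeval_eq_zero hcirr hroot) he]

lemma dvd_toPoly_of_zero_pair_mem (hcirr : Irreducible (X ^ 2 + C c₁ * X + C c₀))
    (hroot : aeval η (X ^ 2 + C c₁ * X + C c₀) = 0)
    (hlin : ∃ I : Ideal (Rpn2 p n),
      PhiMap p n η '' (S : Set ((Fin n → ZMod p) × (Fin n → ZMod p))) = (I : Set (Rpn2 p n)))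
    {g : (ZMod p)[X]} (hgdvd : g ∣ X ^ n + 1)
    (hgen : {r : Rpn p n | ∃ ab ∈ S, toR p n ab.1 = r}
      = (Ideal.span {mkR p n g} : Set (Rpn p n)))
    {b : Fin n → ZMod p} (hb : (0, b) ∈ S) : g ∣ toPoly p n b := by
  have hc₀ : c₀ ≠ 0 := by simpa using quadratic_ne_zero_of_irreducible hcirr 0
  have hmem := S.smul_mem (-c₀)⁻¹ (neg_smul_pair_mem_of_zero_pair_mem hcirr hroot hlin hb)
  have hfst : ((-c₀)⁻¹ • ((-c₀) • b, (-c₁) • b)).1 = b := by simp [smul_smul, hc₀]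
  have hF : toR p n b ∈ (Ideal.span {mkR p n g} : Set (Rpn p n)) := by
    rw [← hgen]
    exact ⟨_, hmem, congrArg _ hfst⟩
  exact dvd_of_quotientMk_dvd hgdvd (Ideal.mem_span_singleton.mp hF)

lemma eq_zero_of_zero_pair_mem {t : ℕ} (ht : 0 < t) (hn : 0 < n)
    (hdvd : n ∣ p ^ t + 1) (hq : Odd ((p ^ t + 1) / n))
    (hcirr : Irreducible (X ^ 2 + C c₁ * X + C c₀))
    (hroot : aeval η (X ^ 2 + C c₁ * X + C c₀) = 0)
    (hiso : ∀ u ∈ S, ∀ v ∈ S, sympForm p n u v = 0)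
    (hneg : ∀ ab ∈ S, (negashift p n hn ab.1, negashift p n hn ab.2) ∈ S)
    (hlin : ∃ I : Ideal (Rpn2 p n),
      PhiMap p n η '' (S : Set ((Fin n → ZMod p) × (Fin n → ZMod p))) = (I : Set (Rpn2 p n)))
    {g : (ZMod p)[X]} (hgdvd : g ∣ X ^ n + 1)
    (hgen : {r : Rpn p n | ∃ ab ∈ S, toR p n ab.1 = r}
      = (Ideal.span {mkR p n g} : Set (Rpn p n)))
    (hgneg : g.comp (-X) = g)
    {a : (Fin n → ZMod p) × (Fin n → ZMod p)} (ha : a ∈ S) (hag : toR p n a.1 = mkR p n g)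
    {b : Fin n → ZMod p} (hb : (0, b) ∈ S) : b = 0 := by
  obtain ⟨gs, hgs⟩ := hgdvd
  have hg0 : g ≠ 0 := by
    rintro rfl
    exact X_pow_add_C_ne_zero hn (1 : ZMod p) (by simpa using hgs)
  set B := reflect (n - 1) (toPoly p n b)
  have hgB : g ∣ B := dvd_of_quotientMk_dvd ⟨gs, hgs⟩ <| mkR_dvd_mkR_reflect hdvd hq hgneg
    (dvd_toPoly_of_zero_pair_mem hcirr hroot hlin ⟨gs, hgs⟩ hgen hb) (natDegree_toPoly_le p n b)
  have hgsB : gs ∣ B := by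
    have hzero : mkR p n (g * B) = 0 := by
      rw [map_mul, ← hag]
      exact toR_mul_mkR_reflect_eq_zero p n hn _ _
        (sum_negashift_iterate_mul_eq_zero hn hiso hneg ha hb)
    rw [← mul_dvd_mul_iff_left hg0, ← hgs]
    exact Ideal.mem_span_singleton.mp (Ideal.Quotient.eq_zero_iff_mem.mp hzero)
  have hcop : IsCoprime g gs := (hgs ▸ separable_X_pow_add_one ht hdvd).isCoprime
  have hB : B = 0 := by
    refine eq_zero_of_dvd_of_natDegree_lt (hgs ▸ hcop.mul_dvd hgB hgsB) ?_
    have : B.natDegree ≤ n - 1 := natDegree_reflect_toPoly_le p n b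
    rw [← C_1, natDegree_X_pow_add_C]
    omega
  apply toR_injective p n
  rw [toR_zero, toR, reflect_eq_zero_iff.mp hB, map_zero]

end Code

theorem stmt8_general (p n t : ℕ) [Fact p.Prime] (ht : 0 < t) (hn : 0 < n)
    (hdvd : n ∣ p ^ t + 1) (hq : Odd ((p ^ t + 1) / n))
    (c₀ c₁ : ZMod p) (hcirr : Irreducible (X ^ 2 + C c₁ * X + C c₀))
    (η : GaloisField p 2) (hroot : aeval η (X ^ 2 + C c₁ * X + C c₀) = 0)
    (S : Submodule (ZMod p) ((Fin n → ZMod p) × (Fin n → ZMod p)))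
    (hiso : ∀ u ∈ S, ∀ v ∈ S, sympForm p n u v = 0)
    (hneg : ∀ ab ∈ S, (negashift p n hn ab.1, negashift p n hn ab.2) ∈ S)
    (hlin : ∃ I : Ideal (Rpn2 p n),
      PhiMap p n η '' (S : Set ((Fin n → ZMod p) × (Fin n → ZMod p)))
        = (I : Set (Rpn2 p n)))
    (g : Polynomial (ZMod p)) (hgdvd : g ∣ X ^ n + 1)
    (hgen : {r : Rpn p n | ∃ ab ∈ S, toR p n ab.1 = r}
        = (Ideal.span {mkR p n g} : Set (Rpn p n)))
    (hgneg : g.comp (-X) = g) :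
    ∃! f : Rpn p n,
      (mkR p n g, f) ∈ toR2 p n '' (S : Set ((Fin n → ZMod p) × (Fin n → ZMod p))) := by
  obtain ⟨a, ha, hag⟩ : mkR p n g ∈ {r : Rpn p n | ∃ ab ∈ S, toR p n ab.1 = r} := by
    rw [hgen]
    exact Ideal.mem_span_singleton_self _
  refine ⟨toR p n a.2, ⟨a, ha, Prod.ext hag rfl⟩, ?_⟩
  rintro f ⟨c, hc, hcf⟩
  have hfst : c.1 = a.1 := toR_injective p n ((congrArg Prod.fst hcf).trans hag.symm)
  have hdiff : ((0 : Fin n → ZMod p), c.2 - a.2) ∈ S := by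
    convert S.sub_mem hc ha using 1
    exact Prod.ext (by simp [hfst]) rfl
  have hsnd := eq_zero_of_zero_pair_mem ht hn hdvd hq hcirr hroot hiso hneg hlin hgdvd hgen hgneg
    ha hag hdiff
  calc f = toR p n c.2 := (congrArg Prod.snd hcf).symm
    _ = toR p n a.2 := by rw [sub_eq_zero.mp hsnd]

/-- for a linear `t`-Frobenius negacyclic code (i.e. `S` totally isotropic,
simultaneously negacyclic, `Φ(S)` an ideal of `R(η)`), if the monic generator `g` of the
ideal corresponding to the first projection of `S` satisfies `g(−X) = g(X)`, then `S` is
uniquely negacyclic: there is exactly one `f ∈ R` with `(g, f) ∈ S`. -/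
theorem stmt8 (p n t : ℕ) [Fact p.Prime] (hp : Odd p) (ht : 0 < t) (hn : 0 < n)
    (hdvd : n ∣ p ^ t + 1) (hq : Odd ((p ^ t + 1) / n))
    (c₀ c₁ : ZMod p) (hcirr : Irreducible (X ^ 2 + C c₁ * X + C c₀))
    (η : GaloisField p 2) (hroot : aeval η (X ^ 2 + C c₁ * X + C c₀) = 0)
    (S : Submodule (ZMod p) ((Fin n → ZMod p) × (Fin n → ZMod p)))
    (hiso : ∀ u ∈ S, ∀ v ∈ S, sympForm p n u v = 0)
    (hneg : ∀ ab ∈ S, (negashift p n hn ab.1, negashift p n hn ab.2) ∈ S)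
    (hlin : ∃ I : Ideal (Rpn2 p n),
      PhiMap p n η '' (S : Set ((Fin n → ZMod p) × (Fin n → ZMod p)))
        = (I : Set (Rpn2 p n)))
    (g : Polynomial (ZMod p)) (hgm : g.Monic) (hgdvd : g ∣ X ^ n + 1)
    (hgen : {r : Rpn p n | ∃ ab ∈ S, toR p n ab.1 = r}
        = (Ideal.span {mkR p n g} : Set (Rpn p n)))
    (hgneg : g.comp (-X) = g) :
    ∃! f : Rpn p n,
      (mkR p n g, f) ∈ toR2 p n '' (S : Set ((Fin n → ZMod p) × (Fin n → ZMod p))) :=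
  stmt8_general p n t ht hn hdvd hq c₀ c₁ hcirr η hroot S hiso hneg hlin g hgdvd hgen hgneg
end

section
/- Let p be an odd prime and let n divide p^{km} + 1 for positive integers k, m with (p^{km}+1)/n an odd integer. Let F_q be the field with q = p^k elements, σ the coefficientwise Frobenius α ↦ α^p on F_q[X], and η ∈ F_q with F_p(η) = F_q. Let g ∈ F_p[X] be a monic divisor of X^n + 1 with g(−X) = g(X) such that every monic irreducible factor of X^n + 1 over F_p whose degree is not divisible by k divides g. Let h ∈ F_q[X] be a monic divisor of (X^n+1)/g with h(−X) = h(X) such that (X^n+1)/g = ∏_{i=0}^{k−1} σ^i(h) in F_q[X]. Fix a nonzero α ∈ F_p and let a ∈ F_q[X] be the unique polynomial of degree < n with a ≡ 1 (mod g) and a ≡ (αη)^{p^i} (mod σ^i(h)) for all 0 ≤ i < k. Then all coefficients of a lie in F_p, and the subspace S = {(u·g, u·a·g) : u ∈ R} of R × R ≅ F_p^n × F_p^n, where R = F_p[X]/(X^n+1), is totally isotropic with respect to the symplectic inner product. -/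
/-
The conditions on `a` are Chinese-remainder congruences modulo the factors `g, h, σh, …, σ^{k-1}h`
of `X^n + 1`, which is squarefree because `p ∤ n`. Applying `σ` permutes the congruences
cyclically (`σ^k h = h` and `(αη)^{p^k} = αη`), so `σ a` satisfies them too; having degree `< n`
it equals `a`, whence the coefficients of `a` are Frobenius-fixed and lie in `F_p`.

For isotropy, `∑ b_j c_j` is the constant coefficient of `b · c̄` in `R`, where `c̄(x) = c(x⁻¹)`.
The symplectic form on `S` then becomes the constant coefficient of `u v̄ g ḡ (ā - a)`, so it
suffices that every `σ^i h` divides `ā - a`. As `n ∣ p^{km} + 1` with odd quotient,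
`x⁻¹ = -x^{p^{km}}` modulo `X^n + 1`; since `σ^i h` is even and fixed by `σ^{km}`, this gives
`σ^i h(x⁻¹) ≡ σ^i h(x)^{p^{km}}`, so `a ≡ c` modulo `σ^i h` forces `ā ≡ c` as well.
-/

open Polynomial

/-- The uniquely negacyclic subspace `{(u·g, u·a·g) : u ∈ R}` of `F_p^n × F_p^n`
(identified inside the vector space via `toR`). -/
noncomputable def Scode (p n : ℕ) (g a : Polynomial (ZMod p)) :
    Set ((Fin n → ZMod p) × (Fin n → ZMod p)) :=
  {ab | ∃ u : Rpn p n, toR p n ab.1 = u * mkR p n g ∧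
    toR p n ab.2 = u * mkR p n a * mkR p n g}

open Finset AdjoinRoot

section Squarefree
variable {α ι : Type*} [CommMonoidWithZero α] [DecompositionMonoid α]

theorem Squarefree.prod_dvd_of_forall_dvd {s : Finset ι} {f : ι → α} {z : α}
    (hsq : Squarefree (∏ i ∈ s, f i)) (h : ∀ i ∈ s, f i ∣ z) : ∏ i ∈ s, f i ∣ z := by
  classical
  refine Finset.prod_dvd_of_isRelPrime (fun i hi j hj hij => ?_) h
  have hij_dvd : f i * f j ∣ ∏ i ∈ s, f i := by
    rw [← Finset.prod_pair hij]
    exact Finset.prod_dvd_prod_of_subset _ _ _ (by simp_all [Finset.insert_subset_iff])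
  exact IsRelPrime.of_squarefree_mul (hsq.squarefree_of_dvd hij_dvd)

end Squarefree

theorem Polynomial.iterate_map_eq_map_pow {R : Type*} [Semiring R] (φ : R →+* R) (i : ℕ)
    (f : R[X]) : (map φ)^[i] f = f.map (φ ^ i) := by
  induction i with
  | zero => exact (map_id).symm
  | succ i ih =>
    rw [Function.iterate_succ_apply', ih, Polynomial.map_map, pow_succ', RingHom.mul_def]

theorem Polynomial.expand_eq_pow_of_map_iterateFrobenius {R : Type*} [CommSemiring R] (p : ℕ)
    [ExpChar R p] {N : ℕ} {f : R[X]} (hf : f.map (iterateFrobenius R p N) = f) :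
    expand R (p ^ N) f = f ^ p ^ N := by
  rw [← map_iterateFrobenius_expand, map_expand, hf]

theorem mem_range_algebraMap_of_pow_eq_self {F : Type*} [Field F] (p : ℕ) [Fact p.Prime]
    [CharP F p] [Algebra (ZMod p) F] {x : F} (hx : x ^ p = x) :
    x ∈ Set.range (algebraMap (ZMod p) F) := by
  rw [← Subfield.mem_bot_iff_pow_eq_self F p, ← ZMod.fieldRange_castHom_eq_bot p] at hx
  obtain ⟨y, rfl⟩ := hx
  exact ⟨y, by congr 1; exact Subsingleton.elim _ _⟩

theorem Polynomial.mem_lifts_of_map_frobenius_eq_self {F : Type*} [Field F] (p : ℕ) [Fact p.Prime]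
    [CharP F p] [Algebra (ZMod p) F] {f : F[X]} (hf : f.map (frobenius F p) = f) :
    f ∈ lifts (algebraMap (ZMod p) F) := by
  refine (lifts_iff_coeff_lifts f).2 fun i => mem_range_algebraMap_of_pow_eq_self p ?_
  rw [← frobenius_def, ← coeff_map, hf]

theorem Polynomial.map_eq_self_of_twisted_congr {K : Type*} [Field K] (φ : K →+* K)
    {k : ℕ} (hk : 0 < k) (hφ : φ ^ k = 1) {g h a : K[X]} {c : K} (hg : g.map φ = g)
    (hsq : Squarefree (g * ∏ i ∈ range k, h.map (φ ^ i)))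
    (hdeg : a.degree < (g * ∏ i ∈ range k, h.map (φ ^ i)).degree)
    (hag : g ∣ a - 1) (hah : ∀ i < k, h.map (φ ^ i) ∣ a - C ((φ ^ i) c)) :
    a.map φ = a := by
  have hpow_mod : ∀ i, φ ^ i = φ ^ (i % k) := fun i => pow_eq_pow_mod i hφ
  have hah' : ∀ i, h.map (φ ^ i) ∣ a - C ((φ ^ i) c) := fun i => by
    rw [hpow_mod i]; exact hah _ (Nat.mod_lt i hk)
  have hgd : g ∣ a.map φ - a := by
    have := map_dvd φ hag
    rw [Polynomial.map_sub, Polynomial.map_one, hg] at this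
    simpa using dvd_sub this hag
  have hhd : ∀ i < k, h.map (φ ^ i) ∣ a.map φ - a := fun i _ => by
    -- the twisted congruence at index `i + k - 1` is the one at `i`, moved by `φ`
    have hφi : φ * φ ^ (i + k - 1) = φ ^ i := by
      rw [← pow_succ', Nat.sub_add_cancel (by omega), pow_add, hφ, mul_one]
    have hshift := map_dvd φ (hah' (i + k - 1))
    rw [Polynomial.map_sub, Polynomial.map_C, Polynomial.map_map, ← RingHom.mul_def, hφi,
      show φ ((φ ^ (i + k - 1)) c) = (φ ^ i) c by rw [← hφi]; rfl] at hshift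
    simpa using dvd_sub hshift (hah' i)
  have hprod : ∏ i ∈ range k, h.map (φ ^ i) ∣ a.map φ - a :=
    (Squarefree.of_mul_right hsq).prod_dvd_of_forall_dvd fun i hi => hhd i (mem_range.1 hi)
  have hM := (IsRelPrime.of_squarefree_mul hsq).mul_dvd hgd hprod
  refine sub_eq_zero.1 (eq_zero_of_dvd_of_degree_lt hM ?_)
  exact (degree_sub_le _ _).trans_lt (max_lt ((degree_map_le).trans_lt hdeg) hdeg)

namespace Negacyclic

variable {K : Type*} [CommRing K] {n : ℕ}

theorem monic_X_pow_add_one [NeZero n] : (X ^ n + 1 : K[X]).Monic := by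
  simpa using monic_X_pow_add_C (1 : K) (NeZero.ne n)

theorem squarefree_X_pow_add_one {F : Type*} [Field F] (p : ℕ) [Fact p.Prime] [CharP F p]
    {N : ℕ} (hN : N ≠ 0) (hnN : n ∣ p ^ N + 1) : Squarefree (X ^ n + 1 : F[X]) := by
  have hpn : ¬ p ∣ n := fun hpn => (Fact.out : p.Prime).one_lt.ne' <| Nat.dvd_one.1 <|
    (Nat.dvd_add_right (dvd_pow_self p hN)).1 (hpn.trans hnN)
  simpa using (separable_X_pow_sub_C' p n (-1 : F) hpn (by simp)).squarefree

theorem root_pow_self : root (X ^ n + 1 : K[X]) ^ n = -1 := by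
  have := eval₂_root (X ^ n + 1 : K[X])
  simp only [eval₂_add, eval₂_X_pow, eval₂_one] at this
  linear_combination this

theorem root_mul_root_pow [NeZero n] : root (X ^ n + 1 : K[X]) * root _ ^ (2 * n - 1) = 1 := by
  rw [← pow_succ', Nat.sub_add_cancel (by have := NeZero.pos n; omega), pow_mul', root_pow_self]
  norm_num

-- `x ↦ x⁻¹`: the root `x` satisfies `x ^ (2n) = 1`.
variable (K n) in
noncomputable def conj [NeZero n] :
    AdjoinRoot (X ^ n + 1 : K[X]) →ₐ[K] AdjoinRoot (X ^ n + 1 : K[X]) :=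
  liftAlgHom _ (Algebra.ofId _ _) (root _ ^ (2 * n - 1)) <| by
    have hodd : Odd (2 * n - 1) := ⟨n - 1, by have := NeZero.pos n; omega⟩
    rw [eval₂_add, eval₂_X_pow, eval₂_one, ← pow_mul, mul_comm, pow_mul, root_pow_self,
      hodd.neg_one_pow, neg_add_cancel]

theorem conj_mk [NeZero n] (f : K[X]) :
    conj K n (mk _ f) = mk _ (f.comp (X ^ (2 * n - 1))) := by
  rw [conj, liftAlgHom_mk, ← aeval_eq, aeval_comp, aeval_eq, map_pow, mk_X]
  rfl

theorem conj_root [NeZero n] : conj K n (root _) = root _ ^ (2 * n - 1) := by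
  simp [conj]

variable (K n) in
noncomputable def constCoeff [NeZero n] : AdjoinRoot (X ^ n + 1 : K[X]) →ₗ[K] K :=
  (lcoeff K 0).comp (modByMonicHom monic_X_pow_add_one)

theorem constCoeff_root_pow [NeZero n] [Nontrivial K] {e : ℕ} (he : e < n) :
    constCoeff K n (root _ ^ e) = if e = 0 then 1 else 0 := by
  have hdeg : (X ^ e : K[X]).degree < (X ^ n + 1 : K[X]).degree := by
    rw [degree_X_pow, ← C_1, degree_X_pow_add_C (NeZero.pos n)]
    exact_mod_cast he
  rw [constCoeff, LinearMap.comp_apply, ← mk_X, ← map_pow, modByMonicHom_mk,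
    (modByMonic_eq_self_iff monic_X_pow_add_one).2 hdeg, lcoeff_apply, coeff_X_pow]
  simp [eq_comm]

theorem root_pow_mul_conj_root_pow [NeZero n] {j l : ℕ} (hl : l ≤ n) :
    root (X ^ n + 1 : K[X]) ^ j * conj K n (root _ ^ l) =
      if l ≤ j then root _ ^ (j - l) else -root _ ^ (n + j - l) := by
  have hx := root_mul_root_pow (K := K) (n := n)
  rw [map_pow, conj_root]
  split_ifs with hlj
  · obtain ⟨d, rfl⟩ := Nat.exists_eq_add_of_le' hlj
    rw [Nat.add_sub_cancel, pow_add, mul_assoc, ← mul_pow, hx, one_pow, mul_one]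
  · obtain ⟨d, hd⟩ : ∃ d, n + j = d + l := ⟨n + j - l, by omega⟩
    have hj : root (X ^ n + 1 : K[X]) ^ j = -(root _ ^ d * root _ ^ l) := by
      rw [← pow_add, ← hd, pow_add, root_pow_self]
      ring
    rw [hj, show n + j - l = d by omega, neg_mul, mul_assoc, ← mul_pow, hx, one_pow, mul_one]

theorem constCoeff_root_pow_mul_conj_root_pow [NeZero n] [Nontrivial K] {j l : ℕ} (hj : j < n)
    (hl : l < n) :
    constCoeff K n (root _ ^ j * conj K n (root _ ^ l)) = if j = l then 1 else 0 := by
  rw [root_pow_mul_conj_root_pow hl.le]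
  split_ifs with hlj hjl hjl
  · rw [constCoeff_root_pow (show j - l < n by omega), if_pos (by omega)]
  · rw [constCoeff_root_pow (show j - l < n by omega), if_neg (by omega)]
  · omega
  · rw [map_neg, constCoeff_root_pow (show n + j - l < n by omega), if_neg (by omega), neg_zero]

theorem sum_mul_eq_constCoeff [NeZero n] [Nontrivial K] (b c : Fin n → K) :
    ∑ j, b j * c j = constCoeff K n
      ((∑ j : Fin n, b j • root _ ^ (j : ℕ)) * conj K n (∑ l : Fin n, c l • root _ ^ (l : ℕ))) := by
  simp only [map_sum, map_smul, sum_mul_sum, smul_mul_smul_comm,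
    constCoeff_root_pow_mul_conj_root_pow (Fin.is_lt _) (Fin.is_lt _), Fin.val_eq_val,
    smul_eq_mul, mul_ite, mul_one, mul_zero, sum_ite_eq, mem_univ, if_true]

theorem constCoeff_mul_conj_eq_of_mul_sub_eq_zero [NeZero n] {G A : AdjoinRoot (X ^ n + 1 : K[X])}
    (hGA : G * (conj K n A - A) = 0) (U V : AdjoinRoot (X ^ n + 1 : K[X])) :
    constCoeff K n (U * G * conj K n (V * A * G)) =
      constCoeff K n (U * A * G * conj K n (V * G)) := by
  congr 1
  simp only [map_mul]
  linear_combination (U * conj K n V * conj K n G) * hGA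

section Frobenius

variable [NeZero n] {p N : ℕ} (hnN : n ∣ p ^ N + 1) (hodd : Odd ((p ^ N + 1) / n))
include hnN hodd

theorem root_pow_two_mul_sub_one_eq_neg :
    root (X ^ n + 1 : K[X]) ^ (2 * n - 1) = -root _ ^ p ^ N := by
  have hu := root_mul_root_pow (K := K) (n := n)
  have hv : root (X ^ n + 1 : K[X]) * root _ ^ p ^ N = -1 := by
    rw [← pow_succ', ← Nat.mul_div_cancel' hnN, pow_mul, root_pow_self, hodd.neg_one_pow]
  linear_combination root (X ^ n + 1 : K[X]) ^ (2 * n - 1) * hv - root _ ^ p ^ N * hu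

variable [ExpChar K p]

theorem conj_mk_eq_pow {F : K[X]} (hneg : F.comp (-X) = F)
    (hfix : F.map (iterateFrobenius K p N) = F) :
    conj K n (mk _ F) = mk _ F ^ p ^ N := by
  calc conj K n (mk _ F) = aeval (-root _ ^ p ^ N) F := by
        rw [← aeval_eq, ← aeval_algHom_apply, conj_root,
          root_pow_two_mul_sub_one_eq_neg hnN hodd]
    _ = aeval (root _) (expand K (p ^ N) F) := by
        rw [expand_aeval, ← aeval_X (R := K) (root _ ^ p ^ N), ← map_neg, ← aeval_comp, hneg,
          aeval_X]
    _ = mk _ F ^ p ^ N := by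
        rw [expand_eq_pow_of_map_iterateFrobenius p hfix, map_pow, aeval_eq]

theorem dvd_comp_sub_of_dvd_sub_C {F a : K[X]} {c : K} (hFM : F ∣ X ^ n + 1)
    (hneg : F.comp (-X) = F) (hfix : F.map (iterateFrobenius K p N) = F) (hFa : F ∣ a - C c) :
    F ∣ a.comp (X ^ (2 * n - 1)) - a := by
  obtain ⟨w, hw⟩ := hFa
  have hsplit : a.comp (X ^ (2 * n - 1)) - a = (a - C c).comp (X ^ (2 * n - 1)) - (a - C c) := by
    rw [sub_comp, C_comp]
    ring
  have hmk : mk _ F ∣ mk (X ^ n + 1 : K[X]) (a.comp (X ^ (2 * n - 1)) - a) := by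
    rw [hsplit, hw, map_sub, ← conj_mk, map_mul, map_mul, conj_mk_eq_pow hnN hodd hneg hfix]
    exact dvd_sub (dvd_mul_of_dvd_left (dvd_pow_self _ (pow_ne_zero _ (expChar_ne_zero K p))) _)
      (dvd_mul_right _ _)
  obtain ⟨r, hr⟩ := hmk
  obtain ⟨r, rfl⟩ := mk_surjective r
  rw [← map_mul, mk_eq_mk] at hr
  simpa using dvd_add (hFM.trans hr) (dvd_mul_right F r)

end Frobenius

theorem dvd_mul_comp_sub_of_forall_dvd_sub_C {L J : Type*} [Field L] [NeZero n] {p N : ℕ}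
    [ExpChar L p] (hnN : n ∣ p ^ N + 1) (hodd : Odd ((p ^ N + 1) / n)) {s : Finset J}
    {G a : L[X]} {F : J → L[X]} {c : J → L} (hM : X ^ n + 1 = G * ∏ i ∈ s, F i)
    (hsq : Squarefree (X ^ n + 1 : L[X])) (hneg : ∀ i ∈ s, (F i).comp (-X) = F i)
    (hfix : ∀ i ∈ s, (F i).map (iterateFrobenius L p N) = F i)
    (hFa : ∀ i ∈ s, F i ∣ a - C (c i)) :
    X ^ n + 1 ∣ G * (a.comp (X ^ (2 * n - 1)) - a) := by
  rw [hM] at hsq ⊢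
  refine mul_dvd_mul_left _ <| (Squarefree.of_mul_right hsq).prod_dvd_of_forall_dvd
    fun i hi => dvd_comp_sub_of_dvd_sub_C hnN hodd ?_ (hneg i hi) (hfix i hi) (hFa i hi)
  exact hM ▸ dvd_mul_of_dvd_right (dvd_prod_of_mem _ hi) _

end Negacyclic

theorem toR_eq_sum (p n : ℕ) (b : Fin n → ZMod p) :
    toR p n b = ∑ j : Fin n, b j • root (X ^ n + 1 : (ZMod p)[X]) ^ (j : ℕ) := by
  change AdjoinRoot.mk _ (toPoly p n b) = _
  simp [toPoly, Algebra.smul_def, AdjoinRoot.algebraMap_eq]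

theorem sympForm_eq_zero_of_dvd {p n : ℕ} [Fact p.Prime] [NeZero n] {g a : (ZMod p)[X]}
    (hga : X ^ n + 1 ∣ g * (a.comp (X ^ (2 * n - 1)) - a)) :
    ∀ u ∈ Scode p n g a, ∀ v ∈ Scode p n g a, sympForm p n u v = 0 := by
  rintro u ⟨U, hu₁, hu₂⟩ v ⟨V, hv₁, hv₂⟩
  have hG : mk _ g * (Negacyclic.conj _ n (mk _ a) - mk (X ^ n + 1) a) = 0 := by
    rw [Negacyclic.conj_mk, ← map_sub, ← map_mul, mk_eq_zero]
    exact hga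
  rw [sympForm, Negacyclic.sum_mul_eq_constCoeff, Negacyclic.sum_mul_eq_constCoeff, ← toR_eq_sum,
    ← toR_eq_sum, ← toR_eq_sum, ← toR_eq_sum, hu₁, hu₂, hv₁, hv₂, sub_eq_zero]
  exact Negacyclic.constCoeff_mul_conj_eq_of_mul_sub_eq_zero hG U V

theorem stmt13_general (p n k m : ℕ) [Fact p.Prime] (hk : 0 < k) (hm : 0 < m)
    (hn : 0 < n) (hdvd : n ∣ p ^ (k * m) + 1) (hq : Odd ((p ^ (k * m) + 1) / n))
    (η : GaloisField p k)
    (g : Polynomial (ZMod p)) (hgdvd : g ∣ X ^ n + 1)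
    (h : Polynomial (GaloisField p k))
    (hhneg : h.comp (-X) = h)
    (hprod : (X ^ n + 1) / g.map (algebraMap (ZMod p) (GaloisField p k)) =
      ∏ i ∈ Finset.range k, (Polynomial.map (frobenius (GaloisField p k) p))^[i] h)
    (α : ZMod p)
    (a : Polynomial (GaloisField p k)) (hadeg : a.degree < n)
    (hag : g.map (algebraMap (ZMod p) (GaloisField p k)) ∣ a - 1)
    (hah : ∀ i < k, (Polynomial.map (frobenius (GaloisField p k) p))^[i] h ∣
      a - C ((algebraMap (ZMod p) (GaloisField p k) α * η) ^ p ^ i)) :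
    ∃ a' : Polynomial (ZMod p),
      a'.map (algebraMap (ZMod p) (GaloisField p k)) = a ∧
      ∀ u ∈ Scode p n g a', ∀ v ∈ Scode p n g a', sympForm p n u v = 0 := by
  have : NeZero n := ⟨hn.ne'⟩
  let := Fintype.ofFinite (GaloisField p k)
  set ι := algebraMap (ZMod p) (GaloisField p k)
  set φ := frobenius (GaloisField p k) p
  have hφ : φ ^ k = 1 := FiniteField.frobenius_pow <| by
    rw [← Nat.card_eq_fintype_card, GaloisField.card p k hk.ne']
  have hsq : Squarefree (X ^ n + 1 : (GaloisField p k)[X]) :=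
    Negacyclic.squarefree_X_pow_add_one p (Nat.mul_ne_zero hk.ne' hm.ne') hdvd
  simp only [iterate_map_eq_map_pow] at hprod hah
  have hgM : g.map ι ∣ X ^ n + 1 := by simpa using map_dvd ι hgdvd
  have hfac : (X ^ n + 1 : (GaloisField p k)[X]) = g.map ι * ∏ i ∈ range k, h.map (φ ^ i) := by
    rw [← hprod, EuclideanDomain.mul_div_cancel' (ne_zero_of_dvd_ne_zero hsq.ne_zero hgM) hgM]
  have hfixa : a.map φ = a := by
    refine map_eq_self_of_twisted_congr φ hk hφ (c := ι α * η) ?_ (hfac ▸ hsq) ?_ hag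
      fun i hi => by convert hah i hi using 3; exact iterate_frobenius _ _ _
    · rw [Polynomial.map_map, Subsingleton.elim (φ.comp ι) ι]
    · rwa [← hfac, ← C_1, degree_X_pow_add_C hn]
  obtain ⟨a', rfl⟩ := (mem_lifts _).1 (mem_lifts_of_map_frobenius_eq_self p hfixa)
  refine ⟨a', rfl, sympForm_eq_zero_of_dvd ?_⟩
  rw [← map_dvd_map' ι]
  simpa [Polynomial.map_comp] using Negacyclic.dvd_mul_comp_sub_of_forall_dvd_sub_C hdvd hq hfac
    hsq (fun i _ => by simpa [Polynomial.map_comp] using congrArg (map (φ ^ i)) hhneg)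
    (fun i _ => by rw [iterateFrobenius_eq_pow, pow_mul, hφ, one_pow]; exact map_id)
    (fun i hi => hah i (mem_range.1 hi))

/-- construction of `km`-Frobenius negacyclic codes: with `g`, `h`, `α`,
`a` as described, all coefficients of `a` lie in `F_p` (i.e. `a` is the image of some
`a' ∈ F_p[X]`), and the subspace `S = {(u·g, u·a·g) : u ∈ R}` is totally isotropic. -/
theorem stmt13 (p n k m : ℕ) [Fact p.Prime] (hp : Odd p) (hk : 0 < k) (hm : 0 < m)
    (hn : 0 < n) (hdvd : n ∣ p ^ (k * m) + 1) (hq : Odd ((p ^ (k * m) + 1) / n))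
    (η : GaloisField p k) (hη : Algebra.adjoin (ZMod p) {η} = ⊤)
    (g : Polynomial (ZMod p)) (hgm : g.Monic) (hgdvd : g ∣ X ^ n + 1)
    (hgneg : g.comp (-X) = g)
    (hgfac : ∀ r : Polynomial (ZMod p), r.Monic → Irreducible r → r ∣ X ^ n + 1 →
      ¬ k ∣ r.natDegree → r ∣ g)
    (h : Polynomial (GaloisField p k)) (hhm : h.Monic)
    (hhdvd : h ∣ (X ^ n + 1) / g.map (algebraMap (ZMod p) (GaloisField p k)))
    (hhneg : h.comp (-X) = h)
    (hprod : (X ^ n + 1) / g.map (algebraMap (ZMod p) (GaloisField p k)) =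
      ∏ i ∈ Finset.range k, (Polynomial.map (frobenius (GaloisField p k) p))^[i] h)
    (α : ZMod p) (hα : α ≠ 0)
    (a : Polynomial (GaloisField p k)) (hadeg : a.degree < n)
    (hag : g.map (algebraMap (ZMod p) (GaloisField p k)) ∣ a - 1)
    (hah : ∀ i < k, (Polynomial.map (frobenius (GaloisField p k) p))^[i] h ∣
      a - C ((algebraMap (ZMod p) (GaloisField p k) α * η) ^ p ^ i)) :
    ∃ a' : Polynomial (ZMod p),
      a'.map (algebraMap (ZMod p) (GaloisField p k)) = a ∧
      ∀ u ∈ Scode p n g a', ∀ v ∈ Scode p n g a', sympForm p n u v = 0 :=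
  stmt13_general p n k m hk hm hn hdvd hq η g hgdvd h hhneg hprod α a hadeg hag hah
end
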